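/- If π(i,m) and π(i,n) are plays on the basic tile τ(λx̄1,…,λx̄k) with i < m < n, and π(i,m) = π(i1,j1),…,π(in',jn') where u1, λȳ1, …, un', λȳn' is the path of labels of nodes from the root of τ to its atomic leaf λx̄j = λȳn' ∈ π(m) and each π(il,jl) is a play on the simple tile ul(…λȳl…) with λȳl ∈ π(jl), then there is a position m' with m < m' < n such that π(m') is a child of π(jl') for some l'. -/

import Mathlib

set_option autoImplicit false

/-! ## Simple types over a single base type -/

inductive Ty : Type
  | base : Ty
  | arr : Ty → Ty → Ty
  deriving DecidableEq

/-- The order of a simple type. -/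
def Ty.order : Ty → ℕ
  | .base => 1
  | .arr A B => max (A.order + 1) B.order

/-- The number of top-level arguments (the width) of a type. -/
def Ty.arity : Ty → ℕ
  | .base => 0
  | .arr _ B => B.arity + 1

/-- The argument types `A₁,…,Aₙ` of `(A₁,…,Aₙ,0)`. -/
def Ty.args : Ty → List Ty
  | .base => []
  | .arr A B => A :: B.args

/-- The largest width of any subtype of a type. -/
def Ty.subWidth : Ty → ℕ
  | .base => 0
  | .arr A B => max (Ty.arity (.arr A B)) (max A.subWidth B.subWidth)

/-! ## Simply typed λ-terms with named, typed variables and constants -/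

inductive Tm : Type
  | var : ℕ → Ty → Tm
  | const : ℕ → Ty → Tm
  | lam : ℕ → Ty → Tm → Tm
  | app : Tm → Tm → Tm
  deriving DecidableEq

namespace Tm

/-- The type of a term (if well-typed). -/
def ty? : Tm → Option Ty
  | .var _ A => some A
  | .const _ A => some A
  | .lam _ A t => (ty? t).map (Ty.arr A)
  | .app s t =>
      match ty? s with
      | some (Ty.arr A B) => if ty? t = some A then some B else none
      | _ => none

/-- The free variables (name/type pairs). -/
def free : Tm → Set (ℕ × Ty)
  | .var x A => {(x, A)}
  | .const _ _ => ∅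
  | .lam x A t => free t \ {(x, A)}
  | .app s t => free s ∪ free t

def Closed (t : Tm) : Prop := t.free = ∅

/-- `z` occurs free in `t`. -/
def freeName (t : Tm) (z : ℕ) : Prop := ∃ B, (z, B) ∈ t.free

/-- A binder `λz` occurs in `t`. -/
def bindsVar : Tm → ℕ → Prop
  | .var _ _, _ => False
  | .const _ _, _ => False
  | .lam x _ t, z => x = z ∨ bindsVar t z
  | .app s t, z => bindsVar s z ∨ bindsVar t z

/-- The constants occurring in a term. -/
def consts : Tm → Set ℕ
  | .var _ _ => ∅
  | .const c _ => {c}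
  | .lam _ _ t => consts t
  | .app s t => consts s ∪ consts t

/-- The list of bound-variable names. -/
def binders : Tm → List ℕ
  | .var _ _ => []
  | .const _ _ => []
  | .lam x _ t => x :: binders t
  | .app s t => binders s ++ binders t

/-- A term is well-named if all its binders are pairwise distinct. -/
def WellNamed (t : Tm) : Prop := t.binders.Nodup

/-- Substitution of `u` for the free variable `x : A` (capture-permitting; it is
only applied to well-named terms with disjoint bound variables). -/
def subst (x : ℕ) (A : Ty) (u : Tm) : Tm → Tm
  | .var y B => if y = x ∧ B = A then u else .var y B
  | .const c B => .const c B
  | .lam y B t => if y = x ∧ B = A then .lam y B t else .lam y B (subst x A u t)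
  | .app s t => .app (subst x A u s) (subst x A u t)

/-- One-step β-reduction, closed under congruence. -/
inductive Beta : Tm → Tm → Prop
  | beta (x : ℕ) (A : Ty) (t u : Tm) : Beta (.app (.lam x A t) u) (subst x A u t)
  | appL {s s' : Tm} (t : Tm) : Beta s s' → Beta (.app s t) (.app s' t)
  | appR (s : Tm) {t t' : Tm} : Beta t t' → Beta (.app s t) (.app s t')
  | lam (x : ℕ) (A : Ty) {t t' : Tm} : Beta t t' → Beta (Tm.lam x A t) (Tm.lam x A t')

/-- β-equality. -/
def BetaEq : Tm → Tm → Prop := Relation.EqvGen Beta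

/-- Application of a head to a list of arguments. -/
def appArgs (t : Tm) (args : List Tm) : Tm := args.foldl .app t

inductive IsHead : Tm → Prop
  | var (x : ℕ) (A : Ty) : IsHead (.var x A)
  | const (c : ℕ) (A : Ty) : IsHead (.const c A)

/-- η-long normal forms. -/
inductive ELNF : Tm → Prop
  | head (u : Tm) (args : List Tm) :
      IsHead u → (appArgs u args).ty? = some Ty.base →
      (∀ i : Fin args.length, ELNF args[i]) → ELNF (appArgs u args)
  | lam (x : ℕ) (A : Ty) {t : Tm} : ELNF t → ELNF (Tm.lam x A t)

/-- Strip the leading λ-abstractions. -/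
def stripLams : Tm → List (ℕ × Ty) × Tm
  | .lam x A t => ((x, A) :: (stripLams t).1, (stripLams t).2)
  | t => ([], t)

/-- Decompose a term into its head and arguments. -/
def headArgs : Tm → Tm × List Tm
  | .app s u => ((headArgs s).1, (headArgs s).2 ++ [u])
  | t => (t, [])

/-- `λx₁…xₙ. b` for a list of binders. -/
def lams (xs : List (ℕ × Ty)) (b : Tm) : Tm := xs.foldr (fun p s => Tm.lam p.1 p.2 s) b

/-- Replace the free variables `xs` by their forbidden constants (via `fc`). -/
def fsubst (fc : ℕ → ℕ) (xs : List (ℕ × Ty)) (t : Tm) : Tm :=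
  xs.foldl (fun s p => subst p.1 p.2 (Tm.const (fc p.1) p.2) s) t

/-- Replace each `yⱼ ∈ ys` by the forbidden constant of the corresponding
`xⱼ ∈ xs`. -/
def fsubstPaired (fc : ℕ → ℕ) (ys xs : List (ℕ × Ty)) (t : Tm) : Tm :=
  (ys.zip xs).foldl (fun s p => subst p.1.1 p.1.2 (Tm.const (fc p.2.1) p.2.2) s) t

def isApp : Tm → Bool
  | .app _ _ => true
  | _ => false

/-- The right size `δ(u)` of a right term. -/
def rsize : Tm → ℕ
  | .var _ _ => 0
  | .const _ _ => 0
  | .lam _ _ t => rsize t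
  | .app s t => rsize s + rsize t + (if s.isApp then 0 else 1)

/-- Largest width of any type occurring in the term. -/
def maxWidth : Tm → ℕ
  | .var _ A => A.subWidth
  | .const _ A => A.subWidth
  | .lam _ A t => max A.subWidth (maxWidth t)
  | .app s t => max (maxWidth s) (maxWidth t)

end Tm

/-! ## Dual interpolation problems -/

/-- An interpolation (dis)equation `x v₁ … vₙ ≈ u`. -/
structure DIEqn : Type where
  args : List Tm
  rhs : Tm
  pos : Bool

/-- A dual interpolation problem: a finite nonempty family of interpolation
equations and disequations with the same free variable `x : xty`, together with
the fresh forbidden constants: `fc` assigns to each bound variable of a right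
term its forbidden constant. -/
structure DIProblem : Type where
  xty : Ty
  eqns : List DIEqn
  eqns_ne : eqns ≠ []
  forb : Set ℕ
  fc : ℕ → ℕ
  fc_mem : ∀ x, fc x ∈ forb
  fc_inj : Function.Injective fc
  wf : ∀ e ∈ eqns,
    e.args.length = xty.args.length ∧
    (∀ p ∈ e.args.zip xty.args, p.1.ty? = some p.2 ∧ p.1.Closed ∧ p.1.ELNF) ∧
    e.rhs.ty? = some Ty.base ∧ e.rhs.Closed ∧
    (∀ c ∈ e.rhs.consts, c ∉ forb) ∧ (∀ v ∈ e.args, ∀ c ∈ v.consts, c ∉ forb)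

/-- The order of a problem is the order of its free variable. -/
def DIProblem.order (P : DIProblem) : ℕ := P.xty.order

/-- The right size `δ` of a problem. -/
def DIProblem.delta (P : DIProblem) : ℕ := (P.eqns.map fun e => e.rhs.rsize).sum

/-- The arity `α` of a problem: the largest width of a type among the subtypes
associated with `P`. -/
def DIProblem.arity (P : DIProblem) : ℕ :=
  max P.xty.subWidth ((P.eqns.map fun e => e.rhs.maxWidth).foldr max 0)

/-- A potential solution term for `P`: closed, in η-long normal form, of the
right type, well-named and without forbidden constants. -/
def Candidate (P : DIProblem) (t : Tm) : Prop :=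
  t.Closed ∧ t.ELNF ∧ t.ty? = some P.xty ∧ t.WellNamed ∧ ∀ c ∈ t.consts, c ∉ P.forb

/-- `t ⊨ P`. -/
def Solves (P : DIProblem) (t : Tm) : Prop :=
  Candidate P t ∧ ∀ e ∈ P.eqns,
    (e.pos = true → Tm.BetaEq (Tm.appArgs t e.args) e.rhs) ∧
    (e.pos = false → ¬ Tm.BetaEq (Tm.appArgs t e.args) e.rhs)

/-! ## Term trees (η-long normal forms with dummy lambdas) -/

/-- Labels of term-tree nodes. -/
inductive TLabel : Type
  | lam : List (ℕ × Ty) → TLabel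
  | var : ℕ → Ty → TLabel
  | const : ℕ → Ty → TLabel
  deriving DecidableEq

/-- Term trees. -/
inductive TTree : Type
  | node : TLabel → List TTree → TTree

def TTree.label : TTree → TLabel
  | .node l _ => l

def TTree.children : TTree → List TTree
  | .node _ cs => cs

/-- The subtree at a path (nodes are identified with paths from the root). -/
def TTree.at? : TTree → List ℕ → Option TTree
  | t, [] => some t
  | t, i :: p =>
      match t.children[i]? with
      | some c => TTree.at? c p
      | none => none

/-- The label at a path. -/
def TTree.labelAt? (T : TTree) (p : List ℕ) : Option TLabel := (T.at? p).map TTree.label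

/-- The variables bound by λ-labels along a path. -/
def TTree.bindersAlong : TTree → List ℕ → List ℕ
  | _, [] => []
  | t, i :: p =>
      (match t.label with
       | .lam xs => xs.map Prod.fst
       | _ => []) ++
      (match t.children[i]? with
       | some c => TTree.bindersAlong c p
       | none => [])

/-- `λ…y…` labels some node of the tree. -/
def TTree.BindsVar (t : TTree) (y : ℕ) : Prop :=
  ∃ p xs, t.labelAt? p = some (.lam xs) ∧ y ∈ xs.map Prod.fst

/-- `y` occurs free in the tree. -/
def TTree.FreeVarOcc (t : TTree) (y : ℕ) : Prop :=
  ∃ p A, t.labelAt? p = some (.var y A) ∧ y ∉ t.bindersAlong p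

def TLabel.isHeadLabel : TLabel → Prop
  | .lam _ => False
  | _ => True

/-! ## Tree representation of a term -/

mutual
  /-- `RepLam T t`: the λ-rooted tree `T` represents the term `t`. -/
  inductive RepLam : TTree → Tm → Prop
    | mk (xs : List (ℕ × Ty)) (h : TTree) (b : Tm) :
        RepHead h b → RepLam (TTree.node (.lam xs) [h]) (Tm.lams xs b)
  /-- `RepHead T t`: the head-rooted tree `T` represents the base-type term `t`. -/
  inductive RepHead : TTree → Tm → Prop
    | var (x : ℕ) (A : Ty) (cs : List TTree) (args : List Tm) :
        cs.length = args.length → (∀ p ∈ cs.zip args, RepLam p.1 p.2) →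
        RepHead (TTree.node (.var x A) cs) (Tm.appArgs (Tm.var x A) args)
    | const (c : ℕ) (A : Ty) (cs : List TTree) (args : List Tm) :
        cs.length = args.length → (∀ p ∈ cs.zip args, RepLam p.1 p.2) →
        RepHead (TTree.node (.const c A) cs) (Tm.appArgs (Tm.const c A) args)
end

/-- The tree `T` is the tree representation (with dummy lambdas) of `t`. -/
def Represents (T : TTree) (t : Tm) : Prop := RepLam T t

/-! ## Look-up tables -/

mutual
  /-- A `θ` look-up table: a partial map from variables of the term tree to
  triples `l ξ j`. -/
  inductive Theta : Type
    | mk : (ℕ → ThetaEntry) → Theta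
  inductive ThetaEntry : Type
    | none : ThetaEntry
    | some : Tm → Xi → ℕ → ThetaEntry
  /-- A `ξ` look-up table: a partial map from variables of left terms to
  triples `t' θ j` (with `t'` a node of the term tree). -/
  inductive Xi : Type
    | mk : (ℕ → XiEntry) → Xi
  inductive XiEntry : Type
    | none : XiEntry
    | some : List ℕ → Theta → ℕ → XiEntry
end

def Theta.fn : Theta → ℕ → ThetaEntry
  | .mk f => f

def Xi.fn : Xi → ℕ → XiEntry
  | .mk f => f

def Theta.look (θ : Theta) (y : ℕ) : Option (Tm × Xi × ℕ) :=
  match θ.fn y with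
  | .none => none
  | .some l ξ j => some (l, ξ, j)

def Xi.look (ξ : Xi) (z : ℕ) : Option (List ℕ × Theta × ℕ) :=
  match ξ.fn z with
  | .none => none
  | .some t θ j => some (t, θ, j)

def Theta.empty : Theta := .mk fun _ => .none

def Xi.empty : Xi := .mk fun _ => .none

/-- Update a `θ` table with a list of new entries. -/
def Theta.updates (θ : Theta) (l : List (ℕ × (Tm × Xi × ℕ))) : Theta :=
  .mk fun y =>
    match l.lookup y with
    | some v => .some v.1 v.2.1 v.2.2
    | none => θ.fn y

/-- Update a `ξ` table with a list of new entries. -/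
def Xi.updates (ξ : Xi) (l : List (ℕ × (List ℕ × Theta × ℕ))) : Xi :=
  .mk fun z =>
    match l.lookup z with
    | some v => .some v.1 v.2.1 v.2.2
    | none => ξ.fn z

/-- `μ` extends `μ'`. -/
def Theta.Extends (θ θ' : Theta) : Prop := ∀ y v, θ'.look y = some v → θ.look y = some v

def Xi.Extends (ξ ξ' : Xi) : Prop := ∀ z v, ξ'.look z = some v → ξ.look z = some v

/-! ## States and positions -/

inductive GState : Type
  | arg : List Tm → Tm → GState     -- argument state q[(l₁,…,lₖ), r]
  | val : Tm → Tm → GState          -- value state q[l, r]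
  | emp : Tm → GState               -- empty state q[−, r]
  | finA : GState                   -- final state q[∀]
  | finE : GState                   -- final state q[∃]
  deriving DecidableEq

def GState.IsFinal : GState → Prop
  | .finA => True
  | .finE => True
  | _ => False

/-- The right term of a state. -/
def GState.rhs? : GState → Option Tm
  | .arg _ r => some r
  | .val _ r => some r
  | .emp r => some r
  | _ => none

/-- `λ…z…` occurs in a left term of the state. -/
def GState.BindsVar : GState → ℕ → Prop
  | .val l _, z => l.bindsVar z
  | .arg ls _, z => ∃ l ∈ ls, l.bindsVar z
  | _, _ => False

/-- `z` occurs free in a left term of the state. -/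
def GState.FreeVar : GState → ℕ → Prop
  | .val l _, z => l.freeName z
  | .arg ls _, z => ∃ l ∈ ls, l.freeName z
  | _, _ => False

/-- A position of the tree-checking game: a node of the term tree, a state and
the two look-up tables. -/
structure GPos : Type where
  node : List ℕ
  st : GState
  th : Theta
  xi : Xi

inductive MoveKind : Type
  | A1 | A2 | A3 | B1 | C1 | C2 | C3 | C4
  deriving DecidableEq

/-! ## The game moves (Figure 2) -/

/-- Updates of `θ` at an A-move: the binders `xs` get the left terms `ls`
paired with `ξ` and the current position index `m`. -/
def aUpd (xs : List (ℕ × Ty)) (ls : List Tm) (ξ : Xi) (m : ℕ) :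
    List (ℕ × (Tm × Xi × ℕ)) :=
  (xs.zip ls).map fun p => (p.1.1, (p.2, ξ, m))

/-- Updates of `ξ` at a C-move: the binders `zs` of the left term get the
successor nodes of `n` paired with `θ` and the current position index `m`. -/
def cUpd (n : List ℕ) (zs : List (ℕ × Ty)) (θ : Theta) (m : ℕ) :
    List (ℕ × (List ℕ × Theta × ℕ)) :=
  zs.zipIdx.map fun p => (p.1.1, (n ++ [p.2], θ, m))

/-- The argument state produced when `∀` chooses the right subterm `s`
(moves B1 and C2): `q[(c_{i₁},…,c_{iₙ}), s{c̄/x̄}]`. -/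
def argStateOf (fc : ℕ → ℕ) (s : Tm) : GState :=
  GState.arg ((s.stripLams.1).map fun p => Tm.const (fc p.1) p.2)
    (Tm.fsubst fc s.stripLams.1 s.stripLams.2)

/-- The value state produced at move C3 for the chosen `w` and `s`:
`q[w'{c̄/ȳ}, s{c̄/x̄}]`. -/
def valStateOf (fc : ℕ → ℕ) (w s : Tm) : GState :=
  GState.val (Tm.fsubstPaired fc w.stripLams.1 s.stripLams.1 w.stripLams.2)
    (Tm.fsubst fc s.stripLams.1 s.stripLams.2)

/-- The moves of the tree-checking game (Figure 2 of the paper); `m` is the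
index of the source position. -/
inductive GMove (T : TTree) (fc : ℕ → ℕ) (m : ℕ) : GPos → MoveKind → GPos → Prop
  | A1 (n : List ℕ) (xs : List (ℕ × Ty)) (ls : List Tm) (r : Tm)
      (θ : Theta) (ξ : Xi) (a : ℕ) :
      T.labelAt? n = some (.lam xs) → ls.length = xs.length →
      T.labelAt? (n ++ [0]) = some (.const a Ty.base) →
      GMove T fc m ⟨n, .arg ls r, θ, ξ⟩ .A1
        ⟨n ++ [0], if r = Tm.const a Ty.base then .finE else .finA,
          θ.updates (aUpd xs ls ξ m), ξ⟩
  | A2 (n : List ℕ) (xs : List (ℕ × Ty)) (ls : List Tm) (r : Tm)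
      (θ : Theta) (ξ : Xi) (f : ℕ) (A : Ty) (ss : List Tm) :
      T.labelAt? n = some (.lam xs) → ls.length = xs.length →
      T.labelAt? (n ++ [0]) = some (.const f A) → A ≠ Ty.base →
      r.headArgs = (Tm.const f A, ss) →
      GMove T fc m ⟨n, .arg ls r, θ, ξ⟩ .A2
        ⟨n ++ [0], .emp r, θ.updates (aUpd xs ls ξ m), ξ⟩
  | A2f (n : List ℕ) (xs : List (ℕ × Ty)) (ls : List Tm) (r : Tm)
      (θ : Theta) (ξ : Xi) (f : ℕ) (A : Ty) :
      T.labelAt? n = some (.lam xs) → ls.length = xs.length →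
      T.labelAt? (n ++ [0]) = some (.const f A) → A ≠ Ty.base →
      r.headArgs.1 ≠ Tm.const f A →
      GMove T fc m ⟨n, .arg ls r, θ, ξ⟩ .A2
        ⟨n ++ [0], .finA, θ.updates (aUpd xs ls ξ m), ξ⟩
  | A3 (n : List ℕ) (xs : List (ℕ × Ty)) (ls : List Tm) (r : Tm)
      (θ : Theta) (ξ ξ₀ : Xi) (y : ℕ) (B : Ty) (l : Tm) (i : ℕ) :
      T.labelAt? n = some (.lam xs) → ls.length = xs.length →
      T.labelAt? (n ++ [0]) = some (.var y B) →
      (θ.updates (aUpd xs ls ξ m)).look y = some (l, ξ₀, i) →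
      GMove T fc m ⟨n, .arg ls r, θ, ξ⟩ .A3
        ⟨n ++ [0], .val l r, θ.updates (aUpd xs ls ξ m), ξ₀⟩
  | B1 (n : List ℕ) (f : ℕ) (A : Ty) (r : Tm) (ss : List Tm)
      (θ : Theta) (ξ : Xi) (d : ℕ) (sd : Tm) :
      T.labelAt? n = some (.const f A) →
      r.headArgs = (Tm.const f A, ss) → ss[d]? = some sd →
      GMove T fc m ⟨n, .emp r, θ, ξ⟩ .B1 ⟨n ++ [d], argStateOf fc sd, θ, ξ⟩
  | C1 (n : List ℕ) (y : ℕ) (B : Ty) (l r : Tm) (θ : Theta) (ξ : Xi) (a : ℕ) :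
      T.labelAt? n = some (.var y B) →
      l.stripLams.2 = Tm.const a Ty.base →
      GMove T fc m ⟨n, .val l r, θ, ξ⟩ .C1
        ⟨n, if r = Tm.const a Ty.base then .finE else .finA, θ,
          ξ.updates (cUpd n l.stripLams.1 θ m)⟩
  | C2 (n : List ℕ) (y : ℕ) (B : Ty) (r : Tm) (θ : Theta) (ξ : Xi)
      (c : ℕ) (A : Ty) (ss : List Tm) (d : ℕ) (sd : Tm) :
      T.labelAt? n = some (.var y B) → A ≠ Ty.base →
      r.headArgs = (Tm.const c A, ss) → ss[d]? = some sd →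
      GMove T fc m ⟨n, .val (Tm.const c A) r, θ, ξ⟩ .C2
        ⟨n ++ [d], argStateOf fc sd, θ, ξ⟩
  | C2f (n : List ℕ) (y : ℕ) (B : Ty) (r : Tm) (θ : Theta) (ξ : Xi)
      (c : ℕ) (A : Ty) :
      T.labelAt? n = some (.var y B) → A ≠ Ty.base →
      r.headArgs.1 ≠ Tm.const c A →
      GMove T fc m ⟨n, .val (Tm.const c A) r, θ, ξ⟩ .C2 ⟨n, .finA, θ, ξ⟩
  | C3 (n : List ℕ) (y : ℕ) (B : Ty) (l r : Tm) (θ : Theta) (ξ : Xi)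
      (f : ℕ) (A : Ty) (ws ss : List Tm) (d : ℕ) (wd sd : Tm) :
      T.labelAt? n = some (.var y B) →
      (l.stripLams.2).headArgs = (Tm.const f A, ws) → ws ≠ [] →
      r.headArgs = (Tm.const f A, ss) → ws[d]? = some wd → ss[d]? = some sd →
      GMove T fc m ⟨n, .val l r, θ, ξ⟩ .C3
        ⟨n, valStateOf fc wd sd, θ, ξ.updates (cUpd n l.stripLams.1 θ m)⟩
  | C3f (n : List ℕ) (y : ℕ) (B : Ty) (l r : Tm) (θ : Theta) (ξ : Xi)
      (f : ℕ) (A : Ty) (ws : List Tm) :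
      T.labelAt? n = some (.var y B) →
      (l.stripLams.2).headArgs = (Tm.const f A, ws) → ws ≠ [] →
      r.headArgs.1 ≠ Tm.const f A →
      GMove T fc m ⟨n, .val l r, θ, ξ⟩ .C3
        ⟨n, .finA, θ, ξ.updates (cUpd n l.stripLams.1 θ m)⟩
  | C4 (n : List ℕ) (y : ℕ) (B : Ty) (l r : Tm) (θ θ₀ : Theta) (ξ : Xi)
      (x : ℕ) (C : Ty) (ws : List Tm) (n' : List ℕ) (i : ℕ) :
      T.labelAt? n = some (.var y B) →
      (l.stripLams.2).headArgs = (Tm.var x C, ws) →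
      (ξ.updates (cUpd n l.stripLams.1 θ m)).look x = some (n', θ₀, i) →
      GMove T fc m ⟨n, .val l r, θ, ξ⟩ .C4
        ⟨n', .arg ws r, θ₀, ξ.updates (cUpd n l.stripLams.1 θ m)⟩

/-! ## Plays of the tree-checking game -/

/-- A play of the game `G(t,P)`: a finite sequence of positions
`π(1),…,π(len)` starting at the root of the term tree with an initial state
chosen from a (dis)equation of `P`, proceeding by the game moves and ending at
the first final state.  `mv j` records which move produced position `j`. -/
structure Play (T : TTree) (P : DIProblem) : Type where
  len : ℕ
  pos : ℕ → GPos
  mv : ℕ → MoveKind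
  one_le : 1 ≤ len
  init_node : (pos 1).node = []
  init_th : (pos 1).th = Theta.empty
  init_xi : (pos 1).xi = Xi.empty
  init_st : ∃ e ∈ P.eqns, (pos 1).st = GState.arg e.args e.rhs
  steps : ∀ m, 1 ≤ m → m < len → GMove T P.fc m (pos m) (mv (m + 1)) (pos (m + 1))
  final_iff : ∀ m, 1 ≤ m → m ≤ len → ((pos m).st.IsFinal ↔ m = len)

namespace Play

variable {T : TTree} {P : DIProblem}

/-- The sequence of positions of a play. -/
def trace (π : Play T P) : List GPos := (List.range π.len).map fun i => π.pos (i + 1)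

/-- The refuter `∀` wins the play. -/
def AWins (π : Play T P) : Prop := (π.pos π.len).st = GState.finA

/-- The initial state of the play is the one given by the (dis)equation `e`. -/
def startsFrom (π : Play T P) (e : DIEqn) : Prop :=
  (π.pos 1).st = GState.arg e.args e.rhs

/-- `π.child j i`: position `π(j)` is a child of position `π(i)`
(Definition 4.10). -/
def child (π : Play T P) (j i : ℕ) : Prop :=
  i < j ∧ j < π.len ∧
  (((π.mv j = .A2 ∨ π.mv j = .B1 ∨ π.mv j = .C2 ∨ π.mv j = .C3) ∧ i = j - 1) ∨
   (π.mv j = .A3 ∧ ∃ y B l ξ', T.labelAt? (π.pos j).node = some (.var y B) ∧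
      (π.pos j).th.look y = some (l, ξ', i)) ∨
   (π.mv j = .C4 ∧ ∃ l r x C, (π.pos (j - 1)).st = GState.val l r ∧
      (l.stripLams.2).headArgs.1 = Tm.var x C ∧
      (π.pos j).xi.look x = some ((π.pos j).node, (π.pos j).th, i)))

/-- `π(j)` is a descendent of `π(i)`: the reflexive-transitive closure of the
child relation. -/
def desc (π : Play T P) : ℕ → ℕ → Prop := Relation.ReflTransGen π.child

/-- The interval `π(i,j)` is right-term invariant. -/
def ri (π : Play T P) (i j : ℕ) : Prop :=
  ∃ r, (π.pos i).st.rhs? = some r ∧ (π.pos j).st.rhs? = some r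

/-- The interval `π(i,j)` is nri: not ri, and `π(j)` is not final. -/
def nri (π : Play T P) (i j : ℕ) : Prop := ¬ π.ri i j ∧ ¬ (π.pos j).st.IsFinal

end Play

/-- Definition 4.5: the refuter `∀` loses the game `G(t,P)`. -/
def RefuterLoses (T : TTree) (P : DIProblem) : Prop :=
  (∀ e ∈ P.eqns, e.pos = true → ∀ π : Play T P, π.startsFrom e → ¬ π.AWins) ∧
  (∀ e ∈ P.eqns, e.pos = false → ∃ π : Play T P, π.startsFrom e ∧ π.AWins)

/-- The number of (distinct) plays of the game `G(t,P)`. -/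
noncomputable def numPlays (T : TTree) (P : DIProblem) : ℕ :=
  Nat.card { tr : List GPos // ∃ π : Play T P, π.trace = tr }

/-! ## Tiles -/

/-- The shape of a (composite) tile: for each atomic leaf of the root simple
tile, optionally a tile placed directly beneath it.  An occurrence of a tile in
a term tree is a pair of a path (the root head node) and a shape. -/
inductive Tile : Type
  | mk : List (Option Tile) → Tile

def Tile.subs : Tile → List (Option Tile)
  | .mk s => s

/-- The trivial simple-tile shape of a head node of a tree. -/
def TTree.simpleTile (t : TTree) : Tile := Tile.mk (List.replicate t.children.length none)

/-- The tile occurrence `(p, τ)` is a valid region of the term tree `T`. -/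
inductive TileValid (T : TTree) : List ℕ → Tile → Prop
  | mk (p : List ℕ) (subs : List (Option Tile)) (t' : TTree) :
      T.at? p = some t' → t'.label.isHeadLabel → subs.length = t'.children.length →
      (∀ i τ', subs[i]? = some (some τ') → TileValid T (p ++ [i, 0]) τ') →
      TileValid T p (.mk subs)

/-- The head nodes of a tile occurrence. -/
inductive TileHead (T : TTree) : List ℕ → Tile → List ℕ → Prop
  | root (p : List ℕ) (subs : List (Option Tile)) : TileHead T p (.mk subs) p
  | sub (p : List ℕ) (subs : List (Option Tile)) (i : ℕ) (τ' : Tile) (q : List ℕ) :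
      subs[i]? = some (some τ') → TileHead T (p ++ [i, 0]) τ' q →
      TileHead T p (.mk subs) q

/-- The λ-nodes of a tile occurrence. -/
inductive TileLam (T : TTree) : List ℕ → Tile → List ℕ → Prop
  | lam (p : List ℕ) (subs : List (Option Tile)) (i : ℕ) :
      i < subs.length → TileLam T p (.mk subs) (p ++ [i])
  | sub (p : List ℕ) (subs : List (Option Tile)) (i : ℕ) (τ' : Tile) (q : List ℕ) :
      subs[i]? = some (some τ') → TileLam T (p ++ [i, 0]) τ' q →
      TileLam T p (.mk subs) q

/-- The atomic leaves of a tile occurrence. -/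
inductive TileLeaf (T : TTree) : List ℕ → Tile → List ℕ → Prop
  | leaf (p : List ℕ) (subs : List (Option Tile)) (i : ℕ) :
      subs[i]? = some none → TileLeaf T p (.mk subs) (p ++ [i])
  | sub (p : List ℕ) (subs : List (Option Tile)) (i : ℕ) (τ' : Tile) (q : List ℕ) :
      subs[i]? = some (some τ') → TileLeaf T (p ++ [i, 0]) τ' q →
      TileLeaf T p (.mk subs) q

/-- All nodes of a tile occurrence. -/
def TileNodeAll (T : TTree) (p : List ℕ) (τ : Tile) (q : List ℕ) : Prop :=
  TileHead T p τ q ∨ TileLam T p τ q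

/-- `y` is bound by some λ-node of the tile. -/
def TileBindsName (T : TTree) (p : List ℕ) (τ : Tile) (y : ℕ) : Prop :=
  ∃ q xs, TileLam T p τ q ∧ T.labelAt? q = some (.lam xs) ∧ y ∈ xs.map Prod.fst

/-- There is an occurrence, at node `q` of the tile, of the variable `y` free
in the tile. -/
def TileFreeVarAt (T : TTree) (p : List ℕ) (τ : Tile) (q : List ℕ) (y : ℕ) : Prop :=
  TileHead T p τ q ∧ (∃ A, T.labelAt? q = some (.var y A)) ∧
  ∀ t', T.at? p = some t' → y ∉ t'.bindersAlong (q.drop p.length)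

/-- There is an occurrence, at node `q` of the tile, of the constant `c`. -/
def TileConstAt (T : TTree) (p : List ℕ) (τ : Tile) (q : List ℕ) (c : ℕ) : Prop :=
  TileHead T p τ q ∧ ∃ A, T.labelAt? q = some (.const c A)

/-- A basic tile: exactly one occurrence of a free variable and no constants,
or exactly one occurrence of a constant and no free variables. -/
def BasicTile (T : TTree) (p : List ℕ) (τ : Tile) : Prop :=
  TileValid T p τ ∧
    (((∃! q : List ℕ, ∃ y : ℕ, TileFreeVarAt T p τ q y) ∧
        ¬ ∃ q c, TileConstAt T p τ q c) ∨
     ((∃! q : List ℕ, ∃ c : ℕ, TileConstAt T p τ q c) ∧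
        ¬ ∃ q y, TileFreeVarAt T p τ q y))

/-- A top tile: a basic tile with a free variable occurrence bound by the
initial λ of the term tree. -/
def TopTile (T : TTree) (p : List ℕ) (τ : Tile) : Prop :=
  BasicTile T p τ ∧ ∃ q y xs, TileFreeVarAt T p τ q y ∧
    T.label = TLabel.lam xs ∧ y ∈ xs.map Prod.fst

/-- `γ` (rooted at `pγ`) is below the atomic leaf `q` of `τ`: there is a path
of successors from `q` to `pγ`. -/
def TileBelowAt (T : TTree) (p : List ℕ) (τ : Tile) (q pγ : List ℕ) : Prop :=
  TileLeaf T p τ q ∧ q <+: pγ ∧ q ≠ pγ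

/-- `γ` is an immediate dependent of `τ` below the atomic leaf `q` of `τ`:
it is below `q` and contains a free variable bound in `τ`. -/
def ImmDependentAt (T : TTree) (p : List ℕ) (τ : Tile) (q pγ : List ℕ) (γ : Tile) :
    Prop :=
  BasicTile T pγ γ ∧ TileBelowAt T p τ q pγ ∧
  ∃ q' y, TileFreeVarAt T pγ γ q' y ∧ TileBindsName T p τ y

/-- `γ` is a dependent of `τ` below the atomic leaf `q` of `τ`. -/
inductive DependentAt (T : TTree) : List ℕ → Tile → List ℕ → List ℕ → Tile → Prop
  | imm (p : List ℕ) (τ : Tile) (q pγ : List ℕ) (γ : Tile) :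
      ImmDependentAt T p τ q pγ γ → DependentAt T p τ q pγ γ
  | trans (p : List ℕ) (τ : Tile) (q p' : List ℕ) (τ' : Tile) (q' pγ : List ℕ)
      (γ : Tile) :
      ImmDependentAt T p τ q p' τ' → DependentAt T p' τ' q' pγ γ →
      DependentAt T p τ q pγ γ

/-- `γ` is a dependent of `τ`. -/
def Dependent (T : TTree) (p : List ℕ) (τ : Tile) (pγ : List ℕ) (γ : Tile) : Prop :=
  ∃ q, DependentAt T p τ q pγ γ

/-- Two tiles belong to the same family. -/
def SameFamily (T : TTree) (p₁ : List ℕ) (τ₁ : Tile) (p₂ : List ℕ) (τ₂ : Tile) : Prop :=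
  Dependent T p₁ τ₁ p₂ τ₂ ∨ Dependent T p₂ τ₂ p₁ τ₁ ∨
  ∃ p' τ', Dependent T p' τ' p₁ τ₁ ∧ Dependent T p' τ' p₂ τ₂

/-- `τ₂` is in the family of tiles associated with `τ₁`. -/
def InFamily (T : TTree) (p₁ : List ℕ) (τ₁ : Tile) (p₂ : List ℕ) (τ₂ : Tile) : Prop :=
  (p₁ = p₂ ∧ τ₁ = τ₂) ∨ SameFamily T p₁ τ₁ p₂ τ₂

/-- `τ` is end at its atomic leaf `q` (j-end): it has no immediate dependents
below `q`. -/
def EndAt (T : TTree) (p : List ℕ) (τ : Tile) (q : List ℕ) : Prop :=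
  TileLeaf T p τ q ∧ ¬ ∃ pγ γ, ImmDependentAt T p τ q pγ γ

/-- An end tile: end at every atomic leaf. -/
def EndTile (T : TTree) (p : List ℕ) (τ : Tile) : Prop :=
  ∀ q, TileLeaf T p τ q → EndAt T p τ q

/-- A constant tile: it contains an occurrence of a constant, or is a
dependent of a constant tile. -/
inductive ConstTile (T : TTree) : List ℕ → Tile → Prop
  | base (p : List ℕ) (τ : Tile) :
      (∃ q c, TileConstAt T p τ q c) → ConstTile T p τ
  | dep (p : List ℕ) (τ : Tile) (p' : List ℕ) (τ' : Tile) :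
      ConstTile T p' τ' → Dependent T p' τ' p τ → ConstTile T p τ

/-- Renaming of labels: bound variables are renamed by `ρ`, the free variable
and the constants are kept. -/
def LabelRen (ρ : ℕ → ℕ) (bound : ℕ → Prop) : TLabel → TLabel → Prop
  | .lam xs, .lam ys => ys = xs.map fun p => (ρ p.1, p.2)
  | .var x A, .var x' A' => A = A' ∧ ((bound x ∧ x' = ρ x) ∨ (¬ bound x ∧ x' = x))
  | .const c A, .const c' A' => c = c' ∧ A = A'
  | _, _ => False

/-- Tile equivalence `τ ≡ γ` (α-equivalence of basic tiles with the same single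
free variable occurrence); corresponding nodes are at the same relative
paths. -/
def TileEquiv (T : TTree) (p : List ℕ) (τ : Tile) (p' : List ℕ) (γ : Tile) : Prop :=
  BasicTile T p τ ∧ BasicTile T p' γ ∧ τ = γ ∧
  ∃ ρ : ℕ → ℕ,
    ∀ q l l', TileNodeAll T p τ q → T.labelAt? q = some l →
      T.labelAt? (p' ++ q.drop p.length) = some l' →
      LabelRen ρ (TileBindsName T p τ) l l'

/-! ## Plays on tiles -/

namespace Play

variable {T : TTree} {P : DIProblem}

/-- `π(i,j)` is a play on the tile occurrence `(p, τ)` ending at its atomic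
leaf `q`, decomposed as the list `cuts` of consecutive plays `(iₗ, jₗ)` on the
simple tiles along the branch of `τ` from its root to `q`. -/
inductive TilePlayCuts (π : Play T P) :
    List ℕ → Tile → List (ℕ × ℕ) → List ℕ → Prop
  | simple (p : List ℕ) (subs : List (Option Tile)) (d i j : ℕ) :
      subs[d]? = some none → (π.pos i).node = p → (π.pos j).node = p ++ [d] →
      π.child j i → TilePlayCuts π p (.mk subs) [(i, j)] (p ++ [d])
  | step (p : List ℕ) (subs : List (Option Tile)) (d i j j₂ : ℕ)
      (cuts : List (ℕ × ℕ)) (q : List ℕ) (τ' : Tile) :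
      subs[d]? = some (some τ') → (π.pos i).node = p →
      (π.pos j).node = p ++ [d] → π.child j i →
      TilePlayCuts π (p ++ [d, 0]) τ' ((j + 1, j₂) :: cuts) q →
      TilePlayCuts π p (.mk subs) ((i, j) :: (j + 1, j₂) :: cuts) q

/-- `π(i,j)` is a play on the tile occurrence `(p, τ)` ending at its atomic
leaf `q`. -/
def TilePlayOn (π : Play T P) (p : List ℕ) (τ : Tile) (i j : ℕ) (q : List ℕ) :
    Prop :=
  ∃ cuts x y, π.TilePlayCuts p τ cuts q ∧ cuts.head? = some x ∧ x.1 = i ∧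
    cuts.getLast? = some y ∧ y.2 = j

/-- A shortest play on `(p, τ)` ending at the leaf `q` (no proper prefix is a
play on `τ` ending at `q`). -/
def ShortestLeafPlay (π : Play T P) (p : List ℕ) (τ : Tile) (i j : ℕ)
    (q : List ℕ) : Prop :=
  π.TilePlayOn p τ i j q ∧ ∀ k, k < j → ¬ π.TilePlayOn p τ i k q

/-- A shortest play on `(p, τ)` (no proper prefix is a play on `τ`). -/
def ShortestPlay (π : Play T P) (p : List ℕ) (τ : Tile) (i j : ℕ) : Prop :=
  (∃ q, π.TilePlayOn p τ i j q) ∧ ∀ k, k < j → ¬ ∃ q, π.TilePlayOn p τ i k q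

/-- The interval `π(i,j)` is internal to the tile `(p, τ)`. -/
def InternalOn (π : Play T P) (p : List ℕ) (τ : Tile) (i j : ℕ) : Prop :=
  ∀ n, i ≤ n → n ≤ j → TileNodeAll T p τ (π.pos n).node

end Play

/-- `τ` is directed towards its atomic leaf `q` (j-directed) with respect to
the interval `π(i,|π|)` (Definition 5.18). -/
inductive DirectedFrom {T : TTree} {P : DIProblem} (π : Play T P)
    (p : List ℕ) (τ : Tile) (q : List ℕ) : ℕ → Prop
  | none (i : ℕ) :
      (∀ m, i ≤ m → m ≤ π.len → (π.pos m).node ≠ p) → DirectedFrom π p τ q i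
  | step (i m n : ℕ) :
      i ≤ m → (π.pos m).node = p →
      (∀ m', i ≤ m' → m' < m → (π.pos m').node ≠ p) →
      π.ShortestLeafPlay p τ m n q → π.ri m n →
      DirectedFrom π p τ q (n + 1) → DirectedFrom π p τ q i

/-- `τ` is directed towards its atomic leaf `q` (j-directed) with respect to
the game `G(t,P)`. -/
def DirectedWrtGame (T : TTree) (P : DIProblem) (p : List ℕ) (τ : Tile)
    (q : List ℕ) : Prop :=
  ∀ π : Play T P, DirectedFrom π p τ q 1

/-! ## b-partitions, variation and correspondence -/

namespace Play

variable {T : TTree} {P : DIProblem}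

/-- The b-partition for the position `π(j)` at a λ-node (Definition 6.14):
`js = [j₀, j₁, …, jₙ]` with `j₀ = 1`, `jₙ = j` and, for each `m`, the interval
`π(jₘ₋₁ + 1, jₘ)` is a play on the `m`-th simple tile along the branch from the
root of the term tree to the node of `π(j)`, ending at the `m`-th λ-node of
that branch. -/
def IsBPartition (π : Play T P) (j : ℕ) (js : List ℕ) : Prop :=
  js.length = (π.pos j).node.length / 2 + 1 ∧ js[0]? = some 1 ∧
  js[(π.pos j).node.length / 2]? = some j ∧
  ∀ m, 1 ≤ m → m ≤ (π.pos j).node.length / 2 →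
    ∀ a b, js[m - 1]? = some a → js[m]? = some b →
      (π.pos (a + 1)).node = (π.pos j).node.take (2 * m - 1) ∧
      (π.pos b).node = (π.pos j).node.take (2 * m) ∧ π.child b (a + 1)

/-- Positions `π(j)`, `π(j')` vary at `π(jk)`, `π(j'k)` with the simple tile
rooted at the path `pτ` (Definition 8.4): they are at the same λ-node and `pτ`
is the head of the first simple tile in their b-partitions at which the two
plays differ. -/
def VaryAt (π : Play T P) (j j' jk j'k : ℕ) (pτ : List ℕ) : Prop :=
  (π.pos j).node = (π.pos j').node ∧ j ≠ j' ∧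
  ∃ js js' k, π.IsBPartition j js ∧ π.IsBPartition j' js' ∧ 1 ≤ k ∧
    (∀ m, m < k → js[m]? = js'[m]?) ∧
    js[k]? = some jk ∧ js'[k]? = some j'k ∧ jk ≠ j'k ∧
    pτ = (π.pos j).node.take (2 * k - 1)

/-- The intervals `π(i,j)` and `π(i',j')` correspond (Definition 8.3): they
have the same length, visit the same nodes and have states of the same kind
with the same left terms (the right terms may differ). -/
def corr (π : Play T P) (i j i' j' : ℕ) : Prop :=
  j < π.len ∧ j' < π.len ∧ i ≤ j ∧ i' ≤ j' ∧ j - i = j' - i' ∧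
  ∀ k, k ≤ j - i →
    (π.pos (i + k)).node = (π.pos (i' + k)).node ∧
    (∀ l r, (π.pos (i + k)).st = GState.val l r →
      ∃ r', (π.pos (i' + k)).st = GState.val l r') ∧
    (∀ ls r, (π.pos (i + k)).st = GState.arg ls r →
      ∃ r', (π.pos (i' + k)).st = GState.arg ls r') ∧
    (∀ r, (π.pos (i + k)).st = GState.emp r →
      ∃ r', (π.pos (i' + k)).st = GState.emp r')

end Play

/-- No simple tile headed by an occurrence of the variable `y` is a dependent
of the tile `(pτ, τ)`. -/
def NotDependentHead (T : TTree) (pτ : List ℕ) (τ : Tile) (y : ℕ) : Prop :=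
  ∀ q A t', T.labelAt? q = some (TLabel.var y A) → T.at? q = some t' →
    ¬ Dependent T pτ τ q t'.simpleTile

mutual
  /-- Look-up tables `n`-similar except for the tile `(pτ, τ)`
  (Definition 8.6). -/
  def ThetaSim (T : TTree) (pτ : List ℕ) (τ : Tile) : ℕ → Theta → Theta → Prop
    | 0, θ, θ' => θ = θ'
    | n + 1, θ, θ' =>
        (∀ y, (θ.look y).isSome = (θ'.look y).isSome) ∧
        (∀ y l ξ i, NotDependentHead T pτ τ y → θ.look y = some (l, ξ, i) →
          ∃ ξ' i', θ'.look y = some (l, ξ', i') ∧ XiSim T pτ τ n ξ ξ')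
  def XiSim (T : TTree) (pτ : List ℕ) (τ : Tile) : ℕ → Xi → Xi → Prop
    | 0, ξ, ξ' => ξ = ξ'
    | n + 1, ξ, ξ' =>
        (∀ z, (ξ.look z).isSome = (ξ'.look z).isSome) ∧
        (∀ z t θ i, ξ.look z = some (t, θ, i) →
          ∃ θ' i', ξ'.look z = some (t, θ', i') ∧ ThetaSim T pτ τ n θ θ')
end

/-- Look-up tables similar except for the tile `(pτ, τ)`: `θ ∼τ θ'`. -/
def ThetaSimA (T : TTree) (pτ : List ℕ) (τ : Tile) (θ θ' : Theta) : Prop :=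
  ∃ n, ThetaSim T pτ τ n θ θ'

/-! ## The transformations T1 and T2 -/

/-- Replace the subtree at a path. -/
def TTree.replaceAt : TTree → List ℕ → TTree → TTree
  | _, [], u => u
  | .node l cs, i :: p, u =>
      .node l (cs.mapIdx fun j c => if j = i then TTree.replaceAt c p u else c)

/-- The game `G(t,P)` avoids the subtree at path `p`. -/
def AvoidedBy (T : TTree) (P : DIProblem) (p : List ℕ) : Prop :=
  ∀ π : Play T P, ∀ i, 1 ≤ i → i ≤ π.len → (π.pos i).node ≠ p

/-- Transformation T1: if every play avoids the subtree rooted at `p` (whose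
root is labelled with a variable or a higher-order constant), replace it by a
single node labelled with a fresh base-type constant `d`. -/
def T1Rel (P : DIProblem) (T T' : TTree) : Prop :=
  ∃ (p : List ℕ) (t' : TTree) (d : ℕ),
    T.at? p = some t' ∧
    ((∃ y B, t'.label = TLabel.var y B) ∨
      (∃ f B, t'.label = TLabel.const f B ∧ B ≠ Ty.base)) ∧
    AvoidedBy T P p ∧
    d ∉ P.forb ∧ (∀ e ∈ P.eqns, d ∉ e.rhs.consts) ∧
    T' = T.replaceAt p (TTree.node (TLabel.const d Ty.base) [])

/-- Transformation T2: if the basic tile `(p, τ)` is end at its atomic leaf `q`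
and directed towards `q` with respect to the game, replace the subtree rooted
at `τ` by the subtree directly beneath `q`. -/
def T2Rel (P : DIProblem) (T T' : TTree) : Prop :=
  ∃ (p q : List ℕ) (τ : Tile) (sub : TTree),
    BasicTile T p τ ∧ EndAt T p τ q ∧ DirectedWrtGame T P p τ q ∧
    T.at? (q ++ [0]) = some sub ∧
    T' = T.replaceAt p sub

/-- `T` (as a tree) solves `P`: it represents a term `t` with `t ⊨ P`. -/
def TSolves (P : DIProblem) (T : TTree) : Prop := ∃ t, Represents T t ∧ Solves P t

/-! ## Size measures -/

/-- A head node with at least one successor: a simple tile with atomic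
leaves. -/
def TTree.headWithChildren : TTree → Bool
  | .node (.lam _) _ => false
  | .node _ [] => false
  | .node _ (_ :: _) => true

/-- The number of simple tiles with atomic leaves along a path. -/
def TTree.tilesOnPath : TTree → List ℕ → ℕ
  | t, [] => if t.headWithChildren then 1 else 0
  | t, i :: p =>
      (if t.headWithChildren then 1 else 0) +
      match t.children[i]? with
      | some c => TTree.tilesOnPath c p
      | none => 0

/-- `|t|`: the number of simple tiles with atomic leaves in a longest branch. -/
noncomputable def TTree.branchTilesMax (T : TTree) : ℕ :=
  sSup { n : ℕ | ∃ p : List ℕ, (T.at? p).isSome = true ∧ TTree.tilesOnPath T p = n }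

/-- `‖t‖`: the total number of simple tiles with atomic leaves. -/
noncomputable def TTree.totalTiles (T : TTree) : ℕ :=
  Nat.card { p : List ℕ // ∃ t', T.at? p = some t' ∧ t'.headWithChildren = true }

/-- A top simple tile: a simple tile whose head variable is bound by the
initial λ of the term tree. -/
def IsTopSimpleTile (T : TTree) (p : List ℕ) : Prop :=
  ∃ t' y A xs, T.at? p = some t' ∧ t'.label = TLabel.var y A ∧
    t'.children ≠ [] ∧ T.label = TLabel.lam xs ∧ y ∈ xs.map Prod.fst

/-- The tower function of Theorem 9.3: `g 1 = 1` and `g (k+1) = (α+1)^(g k)`. -/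
def gfun (α : ℕ) : ℕ → ℕ
  | 0 => 1
  | 1 => 1
  | k + 2 => (α + 1) ^ gfun α (k + 1)

/-! ## Statement 9: two plays on a basic tile from the same position
(Corollary 6.18)

Every look-up table entry points back to the earlier position whose move created it:
θ-entries to A-moves at λ-nodes, ξ-entries to C-moves, and each entry stores the other table
of that position. Along the play `π(i, m)` on `τ` new θ-entries are created only at the ends
`π(jₗ)` of its simple-tile plays, so at `π(m)` the θ-table refers only to positions before `i`
or to these ends. The longer play `π(i, n)` must cross `m` strictly inside one of its
simple-tile plays `π(a, b)`: `π(m)` is in an argument state, which no simple-tile play starts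
from after the first one, and the leaf of `τ` is reached only at the end of `π(i, n)`. As
`π(a)` sits at a head node, `π(b)` can only be a C4-child of `π(a)`, found through a ξ-entry
created at `a ∈ [i, m)`. But if no position of `(m, n)` were a child of some `π(jₗ)`, every A3
and C4 move after `m` would copy the tables of a position outside `[i, m]`, and by induction
the tables after `m` would never refer into `[i, m)`.
-/

theorem Theta.look_updates_aUpd {θ : Theta} {xs : List (ℕ × Ty)} {ls : List Tm} {ξ : Xi}
    {v y : ℕ} {e : Tm × Xi × ℕ} (h : (θ.updates (aUpd xs ls ξ v)).look y = some e) :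
    θ.look y = some e ∨ e.2 = (ξ, v) := by
  unfold Theta.updates Theta.look at h
  cases hl : (aUpd xs ls ξ v).lookup y with
  | none => left; simpa [Theta.look, Theta.fn, hl] using h
  | some w =>
    obtain ⟨_, _, hsplit, -⟩ := List.lookup_eq_some_iff.1 hl
    have hw : (y, w) ∈ aUpd xs ls ξ v := by simp [hsplit]
    simp only [aUpd, List.mem_map, Prod.mk.injEq] at hw
    obtain ⟨_, _, -, rfl⟩ := hw
    simp [Theta.fn, hl] at h
    simp [← h]

theorem Xi.look_updates_cUpd {ξ : Xi} {n : List ℕ} {zs : List (ℕ × Ty)} {θ : Theta}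
    {v z : ℕ} {e : List ℕ × Theta × ℕ} (h : (ξ.updates (cUpd n zs θ v)).look z = some e) :
    ξ.look z = some e ∨ e.2 = (θ, v) := by
  unfold Xi.updates Xi.look at h
  cases hl : (cUpd n zs θ v).lookup z with
  | none => left; simpa [Xi.look, Xi.fn, hl] using h
  | some w =>
    obtain ⟨_, _, hsplit, -⟩ := List.lookup_eq_some_iff.1 hl
    have hw : (z, w) ∈ cUpd n zs θ v := by simp [hsplit]
    simp only [cUpd, List.mem_map, Prod.mk.injEq] at hw
    obtain ⟨_, _, -, rfl⟩ := hw
    simp [Xi.fn, hl] at h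
    simp [← h]

theorem TileValid.labelAt_ne_lam {T : TTree} {p : List ℕ} {τ : Tile} (h : TileValid T p τ)
    (xs : List (ℕ × Ty)) : T.labelAt? p ≠ some (.lam xs) := by
  obtain ⟨_, _, t', hat, hhead, -, -⟩ := h
  rw [TTree.labelAt?, hat, Option.map_some]
  intro h
  rw [Option.some.inj h] at hhead
  exact hhead

theorem TileValid.sub {T : TTree} {p : List ℕ} {subs : List (Option Tile)} {d : ℕ} {τ : Tile}
    (h : TileValid T p (.mk subs)) (hd : subs[d]? = some (some τ)) :
    TileValid T (p ++ [d, 0]) τ := by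
  obtain ⟨_, _, _, -, -, -, hsub⟩ := h
  exact hsub d τ hd

namespace GMove

variable {T : TTree} {fc : ℕ → ℕ} {v : ℕ} {s d : GPos} {k : MoveKind}

theorem th_look_of_ne_C4 (h : GMove T fc v s k d) (hk : k ≠ .C4) {y : ℕ} {e : Tm × Xi × ℕ}
    (he : d.th.look y = some e) :
    s.th.look y = some e ∨ e.2 = (s.xi, v) ∧ ∃ xs, T.labelAt? s.node = some (.lam xs) := by
  cases h with
  | A1 _ xs _ _ _ _ _ hlam | A2 _ xs _ _ _ _ _ _ _ hlam | A2f _ xs _ _ _ _ _ _ hlam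
  | A3 _ xs _ _ _ _ _ _ _ _ _ hlam =>
    exact (Theta.look_updates_aUpd he).imp_right fun h => ⟨h, xs, hlam⟩
  | C4 => exact absurd rfl hk
  | _ => exact Or.inl he

theorem xi_look_of_ne_A3 (h : GMove T fc v s k d) (hk : k ≠ .A3) {z : ℕ}
    {e : List ℕ × Theta × ℕ} (he : d.xi.look z = some e) :
    s.xi.look z = some e ∨ e.2 = (s.th, v) := by
  cases h with
  | C1 | C3 | C3f | C4 => exact Xi.look_updates_cUpd he
  | A3 => exact absurd rfl hk
  | _ => exact Or.inl he

theorem exists_lookup_of_A3 (h : GMove T fc v s .A3 d) :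
    ∃ y B l u, T.labelAt? d.node = some (.var y B) ∧ d.th.look y = some (l, d.xi, u) := by
  cases h with
  | A3 _ _ _ _ _ _ _ y B l u _ _ hvar hlook => exact ⟨y, B, l, u, hvar, hlook⟩

theorem exists_lookup_of_C4 (h : GMove T fc v s .C4 d) :
    ∃ l r x C u, s.st = .val l r ∧ (l.stripLams.2.headArgs).1 = .var x C ∧
      d.xi.look x = some (d.node, d.th, u) := by
  cases h with
  | C4 _ _ _ l r _ _ _ x C _ _ u _ hhead hlook =>
    exact ⟨l, r, x, C, u, rfl, by rw [hhead], hlook⟩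

theorem arg_of_C4 (h : GMove T fc v s .C4 d) : ∃ ls r, d.st = .arg ls r := by
  cases h
  exact ⟨_, _, rfl⟩

theorem ne_C4_of_arg (h : GMove T fc v s k d) {ls : List Tm} {r : Tm}
    (hs : s.st = .arg ls r) : k ≠ .C4 := by
  cases h <;> simp_all

theorem not_arg_of_arg (h : GMove T fc v s k d) {ls : List Tm} {r : Tm}
    (hs : s.st = .arg ls r) (ls' : List Tm) (r' : Tm) : d.st ≠ .arg ls' r' := by
  cases h <;> simp_all
  split <;> simp

theorem kind_of_not_isFinal (h : GMove T fc v s k d) (hA3 : k ≠ .A3) (hC4 : k ≠ .C4)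
    (hd : ¬ d.st.IsFinal) : k = .A2 ∨ k = .B1 ∨ k = .C2 ∨ k = .C3 := by
  cases h <;> simp_all [GState.IsFinal] <;> split at hd <;> simp_all

theorem arg_and_th_eq_of_node_ne (h : GMove T fc v s k d)
    (hk : k = .A2 ∨ k = .B1 ∨ k = .C2 ∨ k = .C3)
    (hs : ∀ xs, T.labelAt? s.node ≠ some (.lam xs)) (hnode : d.node ≠ s.node)
    (hd : ¬ d.st.IsFinal) : (∃ ls r, d.st = .arg ls r) ∧ d.th = s.th := by
  cases h <;> simp_all [GState.IsFinal, argStateOf]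

end GMove

namespace Play

variable {T : TTree} {P : DIProblem} (π : Play T P)

def ThetaRefers (w u : ℕ) : Prop := ∃ y l ξ, (π.pos w).th.look y = some (l, ξ, u)

def XiRefers (w u : ℕ) : Prop := ∃ z nd θ, (π.pos w).xi.look z = some (nd, θ, u)

/-- Each θ-entry of `π(w)` was created by the A-move at an earlier λ-node `π(u)`, and stores
the ξ-table of `π(u)`. -/
def ThetaWF (w : ℕ) : Prop :=
  ∀ y l ξ u, (π.pos w).th.look y = some (l, ξ, u) →
    1 ≤ u ∧ u < w ∧ ξ = (π.pos u).xi ∧ ∃ xs, T.labelAt? (π.pos u).node = some (.lam xs)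

def XiWF (w : ℕ) : Prop :=
  ∀ z nd θ u, (π.pos w).xi.look z = some (nd, θ, u) → 1 ≤ u ∧ u < w ∧ θ = (π.pos u).th

/-- `π(a, b)` is a play on the simple tile headed by the node of `π(a)`. -/
def SimpleTilePlay (a b : ℕ) : Prop :=
  π.child b a ∧ (∀ xs, T.labelAt? (π.pos a).node ≠ some (.lam xs)) ∧
    ∃ d, (π.pos b).node = (π.pos a).node ++ [d]

theorem not_isFinal {w : ℕ} (hw : 1 ≤ w) (hwl : w < π.len) : ¬ (π.pos w).st.IsFinal :=
  fun h => by have := (π.final_iff w hw hwl.le).1 h; omega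

theorem tablesWF : ∀ w, 1 ≤ w → w ≤ π.len → π.ThetaWF w ∧ π.XiWF w := by
  intro w
  induction w using Nat.strong_induction_on with
  | _ w IH =>
  intro hw hwl
  obtain rfl | ⟨v, rfl, hv⟩ : w = 1 ∨ ∃ v, w = v + 1 ∧ 1 ≤ v :=
    (eq_or_lt_of_le hw).imp Eq.symm fun h => ⟨w - 1, by omega, by omega⟩
  · simp [ThetaWF, XiWF, π.init_th, π.init_xi, Theta.empty, Xi.empty, Theta.look, Xi.look,
      Theta.fn, Xi.fn]
  have hmv := π.steps v hv (by omega)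
  obtain ⟨IHθ, IHξ⟩ := IH v (by omega) hv (by omega)
  have hθ : π.mv (v + 1) ≠ .C4 → π.ThetaWF (v + 1) := by
    intro hk y l ξ u he
    rcases hmv.th_look_of_ne_C4 hk he with he | ⟨he, xs, hxs⟩
    · obtain ⟨h1, h2, h3⟩ := IHθ _ _ _ _ he
      exact ⟨h1, by omega, h3⟩
    · obtain ⟨rfl, rfl⟩ := Prod.mk.inj he
      exact ⟨hv, by omega, rfl, xs, hxs⟩
  have hξ : π.mv (v + 1) ≠ .A3 → π.XiWF (v + 1) := by
    intro hk z nd θ u he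
    rcases hmv.xi_look_of_ne_A3 hk he with he | he
    · obtain ⟨h1, h2, h3⟩ := IHξ _ _ _ _ he
      exact ⟨h1, by omega, h3⟩
    · obtain ⟨rfl, rfl⟩ := Prod.mk.inj he
      exact ⟨hv, by omega, rfl⟩
  by_cases hA3 : π.mv (v + 1) = .A3
  · have hθ' := hθ (by simp [hA3])
    rw [hA3] at hmv
    obtain ⟨y, B, l, u, -, hlook⟩ := hmv.exists_lookup_of_A3
    obtain ⟨hu, huv, hxi, -⟩ := hθ' _ _ _ _ hlook
    refine ⟨hθ', fun z nd θ u' he => ?_⟩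
    obtain ⟨h1, h2, h3⟩ := (IH u huv hu (by omega)).2 z nd θ u' (hxi ▸ he)
    exact ⟨h1, by omega, h3⟩
  by_cases hC4 : π.mv (v + 1) = .C4
  · have hξ' := hξ (by simp [hC4])
    rw [hC4] at hmv
    obtain ⟨l, r, x, C, u, -, -, hlook⟩ := hmv.exists_lookup_of_C4
    obtain ⟨hu, huv, hth⟩ := hξ' _ _ _ _ hlook
    refine ⟨fun y l ξ u' he => ?_, hξ'⟩
    obtain ⟨h1, h2, h3⟩ := (IH u huv hu (by omega)).1 y l ξ u' (hth ▸ he)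
    exact ⟨h1, by omega, h3⟩
  exact ⟨hθ hC4, hξ hA3⟩

variable {π}

theorem ThetaRefers.one_le_lt {w u : ℕ} (h : π.ThetaRefers w u) (hw : 1 ≤ w)
    (hwl : w ≤ π.len) : 1 ≤ u ∧ u < w := by
  obtain ⟨y, l, ξ, h⟩ := h
  obtain ⟨h1, h2, -⟩ := (π.tablesWF w hw hwl).1 y l ξ u h
  exact ⟨h1, h2⟩

theorem XiRefers.one_le_lt {w u : ℕ} (h : π.XiRefers w u) (hw : 1 ≤ w)
    (hwl : w ≤ π.len) : 1 ≤ u ∧ u < w := by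
  obtain ⟨z, nd, θ, h⟩ := h
  obtain ⟨h1, h2, -⟩ := (π.tablesWF w hw hwl).2 z nd θ u h
  exact ⟨h1, h2⟩

theorem ThetaRefers.of_th_eq {w w' u : ℕ} (h : π.ThetaRefers w u)
    (he : (π.pos w).th = (π.pos w').th) : π.ThetaRefers w' u := by
  obtain ⟨y, l, ξ, h⟩ := h
  exact ⟨y, l, ξ, he ▸ h⟩

theorem XiRefers.of_xi_eq {w w' u : ℕ} (h : π.XiRefers w u)
    (he : (π.pos w).xi = (π.pos w').xi) : π.XiRefers w' u := by
  obtain ⟨z, nd, θ, h⟩ := h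
  exact ⟨z, nd, θ, he ▸ h⟩

variable (π)

theorem thetaRefers_succ {v u : ℕ} (hv : 1 ≤ v) (hvl : v < π.len) (hk : π.mv (v + 1) ≠ .C4)
    (h : π.ThetaRefers (v + 1) u) : π.ThetaRefers v u ∨ u = v := by
  obtain ⟨y, l, ξ, h⟩ := h
  rcases (π.steps v hv hvl).th_look_of_ne_C4 hk h with h | ⟨h, -⟩
  · exact Or.inl ⟨y, l, ξ, h⟩
  · exact Or.inr (Prod.mk.inj h).2

theorem xiRefers_succ {v u : ℕ} (hv : 1 ≤ v) (hvl : v < π.len) (hk : π.mv (v + 1) ≠ .A3)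
    (h : π.XiRefers (v + 1) u) : π.XiRefers v u ∨ u = v := by
  obtain ⟨z, nd, θ, h⟩ := h
  rcases (π.steps v hv hvl).xi_look_of_ne_A3 hk h with h | h
  · exact Or.inl ⟨z, nd, θ, h⟩
  · exact Or.inr (Prod.mk.inj h).2

theorem exists_child_of_A3 {v : ℕ} (hv : 1 ≤ v) (hvl : v + 1 < π.len)
    (hk : π.mv (v + 1) = .A3) :
    ∃ u, π.child (v + 1) u ∧ π.ThetaRefers (v + 1) u ∧ (π.pos (v + 1)).xi = (π.pos u).xi := by
  have hmv := π.steps v hv (by omega)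
  rw [hk] at hmv
  obtain ⟨y, B, l, u, hvar, hlook⟩ := hmv.exists_lookup_of_A3
  obtain ⟨-, hu, hxi, -⟩ := (π.tablesWF (v + 1) (by omega) hvl.le).1 _ _ _ _ hlook
  exact ⟨u, ⟨hu, hvl, Or.inr (Or.inl ⟨hk, y, B, l, _, hvar, hlook⟩)⟩, ⟨y, l, _, hlook⟩, hxi⟩

theorem exists_child_of_C4 {v : ℕ} (hv : 1 ≤ v) (hvl : v + 1 < π.len)
    (hk : π.mv (v + 1) = .C4) :
    ∃ u, π.child (v + 1) u ∧ π.XiRefers (v + 1) u ∧ (π.pos (v + 1)).th = (π.pos u).th := by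
  have hmv := π.steps v hv (by omega)
  rw [hk] at hmv
  obtain ⟨l, r, x, C, u, hval, hhead, hlook⟩ := hmv.exists_lookup_of_C4
  obtain ⟨-, hu, hth⟩ := (π.tablesWF (v + 1) (by omega) hvl.le).2 _ _ _ _ hlook
  exact ⟨u, ⟨hu, hvl, Or.inr (Or.inr ⟨hk, l, r, x, C, hval, hhead, hlook⟩)⟩,
    ⟨x, _, _, hlook⟩, hth⟩

theorem child_succ_self {v : ℕ} (hv : 1 ≤ v) (hvl : v + 1 < π.len)
    (hA3 : π.mv (v + 1) ≠ .A3) (hC4 : π.mv (v + 1) ≠ .C4) : π.child (v + 1) v :=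
  ⟨by omega, hvl, Or.inl ⟨(π.steps v hv (by omega)).kind_of_not_isFinal hA3 hC4
    (π.not_isFinal (by omega) hvl), rfl⟩⟩

variable {π}

theorem SimpleTilePlay.one_le {a b : ℕ} (h : π.SimpleTilePlay a b) : 1 ≤ a := by
  obtain ⟨⟨hab, hbl, ⟨-, rfl⟩ | ⟨-, y, B, l, ξ, -, hlook⟩ | ⟨-, l, r, x, C, -, -, hlook⟩⟩,
    -, d, hd⟩ := h
  · by_contra ha
    obtain rfl : b = 1 := by omega
    simp [π.init_node] at hd
  · exact ((π.tablesWF b (by omega) hbl.le).1 _ _ _ _ hlook).1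
  · exact ((π.tablesWF b (by omega) hbl.le).2 _ _ _ _ hlook).1

theorem SimpleTilePlay.arg_and_th_eq {a b : ℕ} (h : π.SimpleTilePlay a b) :
    (∃ ls r, (π.pos b).st = .arg ls r) ∧ (π.pos b).th = (π.pos a).th := by
  have ha := h.one_le
  obtain ⟨⟨hab, hbl, ⟨hk, rfl⟩ | ⟨-, y, B, l, ξ, -, hlook⟩ | ⟨hk, l, r, x, C, -, -, hlook⟩⟩,
    hhead, d, hd⟩ := h
  · have hmv := π.steps (b - 1) ha (by omega)
    rw [show b - 1 + 1 = b by omega] at hmv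
    exact hmv.arg_and_th_eq_of_node_ne hk hhead (by simp [hd]) (π.not_isFinal (by omega) hbl)
  · obtain ⟨-, -, -, xs, hxs⟩ := (π.tablesWF b (by omega) hbl.le).1 _ _ _ _ hlook
    exact absurd hxs (hhead xs)
  · refine ⟨?_, ((π.tablesWF b (by omega) hbl.le).2 _ _ _ _ hlook).2.2⟩
    have hmv := π.steps (b - 1) (by omega) (by omega)
    rw [show b - 1 + 1 = b by omega, hk] at hmv
    exact hmv.arg_of_C4

theorem SimpleTilePlay.of_child {p : List ℕ} {τ : Tile} (hv : TileValid T p τ) {a b d : ℕ}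
    (hch : π.child b a) (ha : (π.pos a).node = p) (hb : (π.pos b).node = p ++ [d]) :
    π.SimpleTilePlay a b :=
  ⟨hch, ha ▸ hv.labelAt_ne_lam, d, by rw [ha, hb]⟩

namespace TilePlayCuts

variable {p q : List ℕ} {τ : Tile} {cs : List (ℕ × ℕ)}

theorem fst_lt_snd_of_mem (D : π.TilePlayCuts p τ cs q) : ∀ c ∈ cs, c.1 < c.2 := by
  induction D with
  | simple _ _ _ _ _ _ _ _ hch =>
    intro c hc
    rcases List.mem_singleton.1 hc with rfl
    exact hch.1
  | step _ _ _ _ _ _ _ _ _ _ _ _ hch _ IH =>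
    intro c hc
    rcases List.mem_cons.1 hc with rfl | hc
    · exact hch.1
    · exact IH c hc

theorem simpleTilePlay_of_mem (D : π.TilePlayCuts p τ cs q) (hv : TileValid T p τ) :
    ∀ c ∈ cs, π.SimpleTilePlay c.1 c.2 := by
  induction D with
  | simple _ _ _ _ _ _ hi hj hch =>
    intro c hc
    rcases List.mem_singleton.1 hc with rfl
    exact .of_child hv hch hi hj
  | step _ _ _ _ _ _ _ _ _ hsub hi hj hch _ IH =>
    intro c hc
    rcases List.mem_cons.1 hc with rfl | hc
    · exact .of_child hv hch hi hj
    · exact IH (hv.sub hsub) c hc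

theorem head_snd_le_getLast_snd (D : π.TilePlayCuts p τ cs q) {c₀ cl : ℕ × ℕ}
    (h₀ : cs.head? = some c₀) (hl : cs.getLast? = some cl) : c₀.2 ≤ cl.2 := by
  induction D generalizing c₀ with
  | simple => simp_all
  | step _ _ _ _ j j₂ _ _ _ _ _ _ _ D IH =>
    simp only [List.head?_cons, Option.some.injEq, List.getLast?_cons_cons] at h₀ hl
    subst h₀
    have hlt := D.fst_lt_snd_of_mem _ List.mem_cons_self
    have hle := IH rfl hl
    dsimp only at hlt hle ⊢
    omega

theorem exists_mem_of_arg (D : π.TilePlayCuts p τ cs q) (hv : TileValid T p τ)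
    {c₀ cl : ℕ × ℕ} (h₀ : cs.head? = some c₀) (hl : cs.getLast? = some cl) {w : ℕ}
    (hw₀ : c₀.1 < w) (hwl : w ≤ cl.2) (hw : ∃ ls r, (π.pos w).st = .arg ls r) :
    ∃ c ∈ cs, c₀.1 ≤ c.1 ∧ c.1 < w ∧ w ≤ c.2 ∧ c.2 ≤ cl.2 := by
  induction D generalizing c₀ with
  | simple =>
    simp only [List.head?_cons, Option.some.injEq, List.getLast?_singleton] at h₀ hl
    subst h₀ hl
    exact ⟨_, List.mem_singleton_self _, le_rfl, hw₀, hwl, le_rfl⟩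
  | step _ _ _ i j _ _ _ _ hsub hi hj hch D IH =>
    simp only [List.head?_cons, Option.some.injEq, List.getLast?_cons_cons] at h₀ hl
    subst h₀
    obtain ⟨ls, r, hst⟩ := hw
    have hij := SimpleTilePlay.of_child hv hch hi hj
    rcases lt_trichotomy w (j + 1) with hwj | rfl | hwj
    · have hlt := D.fst_lt_snd_of_mem _ List.mem_cons_self
      have hle := D.head_snd_le_getLast_snd rfl hl
      dsimp only at hlt hle hw₀ ⊢
      exact ⟨(i, j), List.mem_cons_self, le_rfl, hw₀, by omega, by omega⟩
    · obtain ⟨⟨ls', r', hst'⟩, -⟩ := hij.arg_and_th_eq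
      exact absurd hst ((π.steps j (by have := hij.one_le; omega) hch.2.1).not_arg_of_arg
        hst' ls r)
    · obtain ⟨c, hc, hjc, h⟩ := IH (hv.sub hsub) rfl hl hwj
      exact ⟨c, List.mem_cons_of_mem _ hc, by have := hch.1; simp only at hjc ⊢; omega, h⟩

theorem thetaRefers_getLast (D : π.TilePlayCuts p τ cs q) (hv : TileValid T p τ)
    {c₀ cl : ℕ × ℕ} (h₀ : cs.head? = some c₀) (hl : cs.getLast? = some cl) {u : ℕ}
    (hu : π.ThetaRefers cl.2 u) : π.ThetaRefers c₀.1 u ∨ ∃ c ∈ cs, u = c.2 := by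
  induction D generalizing c₀ with
  | simple _ _ _ i j _ hi hj hch =>
    simp only [List.head?_cons, Option.some.injEq, List.getLast?_singleton] at h₀ hl
    subst h₀ hl
    have hij := SimpleTilePlay.of_child hv hch hi hj
    exact Or.inl (hu.of_th_eq hij.arg_and_th_eq.2)
  | step _ _ _ i j _ _ _ _ hsub hi hj hch D IH =>
    simp only [List.head?_cons, Option.some.injEq, List.getLast?_cons_cons] at h₀ hl
    subst h₀
    have hij := SimpleTilePlay.of_child hv hch hi hj
    obtain ⟨⟨ls, r, hst⟩, hth⟩ := hij.arg_and_th_eq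
    have hj : 1 ≤ j := by have := hij.one_le; have := hch.1; omega
    rcases IH (hv.sub hsub) rfl hl with hu | ⟨c, hc, rfl⟩
    · rcases π.thetaRefers_succ hj hch.2.1 ((π.steps j hj hch.2.1).ne_C4_of_arg hst) hu
        with hu | rfl
      · exact Or.inl (hu.of_th_eq hth)
      · exact Or.inr ⟨(i, u), List.mem_cons_self, rfl⟩
    · exact Or.inr ⟨c, List.mem_cons_of_mem _ hc, rfl⟩

theorem node_getLast (D : π.TilePlayCuts p τ cs q) {cl : ℕ × ℕ}
    (hl : cs.getLast? = some cl) : (π.pos cl.2).node = q := by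
  induction D with
  | simple _ _ _ _ _ _ _ hj =>
    simp only [List.getLast?_singleton, Option.some.injEq] at hl
    exact hl ▸ hj
  | step _ _ _ _ _ _ _ _ _ _ _ _ _ _ IH =>
    exact IH (by rwa [List.getLast?_cons_cons] at hl)

theorem node_snd_eq_append (D : π.TilePlayCuts p τ cs q) :
    ∀ c ∈ cs, ∃ d s, (π.pos c.2).node = p ++ d :: s := by
  induction D with
  | simple _ _ d _ _ _ _ hj =>
    intro c hc
    rcases List.mem_singleton.1 hc with rfl
    exact ⟨d, [], hj⟩
  | step _ _ d _ _ _ _ _ _ _ _ hj _ _ IH =>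
    intro c hc
    rcases List.mem_cons.1 hc with rfl | hc
    · exact ⟨d, [], hj⟩
    · obtain ⟨d', s, h⟩ := IH c hc
      exact ⟨d, 0 :: d' :: s, by simp [h]⟩

theorem leaf_eq_append (D : π.TilePlayCuts p τ cs q) : ∃ d s, q = p ++ d :: s := by
  induction D with
  | simple _ _ d => exact ⟨d, [], rfl⟩
  | step _ _ d _ _ _ _ _ _ _ _ _ _ _ IH =>
    obtain ⟨d', s, h⟩ := IH
    exact ⟨d, 0 :: d' :: s, by simp [h]⟩

theorem thetaRefers_getLast_lt (D : π.TilePlayCuts p τ cs q)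
    (hv : TileValid T p τ) {c₀ cl : ℕ × ℕ} (h₀ : cs.head? = some c₀)
    (hl : cs.getLast? = some cl) {u : ℕ} (hu : π.ThetaRefers cl.2 u) :
    u < c₀.1 ∨ ∃ c ∈ cs, u = c.2 := by
  have h₀play := D.simpleTilePlay_of_mem hv c₀ (List.mem_of_mem_head? h₀)
  exact (D.thetaRefers_getLast hv h₀ hl hu).imp_left fun h =>
    (h.one_le_lt h₀play.one_le (h₀play.1.1.trans h₀play.1.2.1).le).2

theorem snd_eq_getLast_snd_of_node_eq {p q₁ q₂ : List ℕ} {τ : Tile} {cs₁ cs₂ : List (ℕ × ℕ)}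
    (D₁ : π.TilePlayCuts p τ cs₁ q₁) (D₂ : π.TilePlayCuts p τ cs₂ q₂) {c cl : ℕ × ℕ}
    (hc : c ∈ cs₂) (hq : (π.pos c.2).node = q₁) (hl : cs₂.getLast? = some cl) :
    c.2 = cl.2 := by
  induction D₁ generalizing cs₂ q₂ with
  | simple p subs d _ _ hsub =>
    cases D₂ with
    | simple =>
      simp only [List.mem_singleton, List.getLast?_singleton, Option.some.injEq] at hc hl
      rw [hc, hl]
    | step _ _ d₂ _ _ _ _ _ _ hsub₂ _ hj₂ _ D₂ =>
      rcases List.mem_cons.1 hc with rfl | hc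
      · obtain rfl : d₂ = d := by simpa [hj₂] using hq
        simp [hsub] at hsub₂
      · obtain ⟨d', s, h⟩ := D₂.node_snd_eq_append c hc
        simp [h] at hq
  | step p subs d _ _ _ _ _ τ' hsub _ _ _ D₁ IH =>
    obtain ⟨d₁, s₁, hq₁⟩ := D₁.leaf_eq_append
    cases D₂ with
    | simple =>
      simp only [List.mem_singleton, List.getLast?_singleton, Option.some.injEq] at hc hl
      rw [hc, hl]
    | step _ _ d₂ _ _ _ _ _ τ₂ hsub₂ _ hj₂ _ D₂ =>
      rcases List.mem_cons.1 hc with rfl | hc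
      · simp [hj₂, hq₁] at hq
      · obtain ⟨d', s, h⟩ := D₂.node_snd_eq_append c hc
        obtain rfl : d₂ = d := by simp [h, hq₁] at hq; exact hq.1
        obtain rfl : τ₂ = τ' := by simpa [hsub] using hsub₂.symm
        rw [List.getLast?_cons_cons] at hl
        exact IH D₂ hc hq hl

end TilePlayCuts

variable (π)

/-- The tables at `π(w)` refer into `[i, m]` only through θ-entries created at positions of
`E`. -/
def RefersOutside (i m : ℕ) (E : Set ℕ) (w : ℕ) : Prop :=
  (∀ u, π.ThetaRefers w u → u < i ∨ u ∈ E ∨ m < u) ∧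
    (m < w → ∀ u, π.XiRefers w u → u < i ∨ m < u)

theorem refersOutside_succ {i m n v : ℕ} {E : Set ℕ} (him : i < m) (hmE : m ∈ E)
    (hm : ∃ ls r, (π.pos m).st = .arg ls r) (hnl : n ≤ π.len)
    (hno : ∀ w u, m < w → w < n → u ∈ E → ¬ π.child w u) (hmv : m ≤ v) (hvn : v + 1 < n)
    (IH : ∀ u, m ≤ u → u ≤ v → π.RefersOutside i m E u) : π.RefersOutside i m E (v + 1) := by
  have hv : 1 ≤ v := by omega
  have hvl : v + 1 < π.len := by omega
  have hθloc : π.mv (v + 1) ≠ .C4 → ∀ u, π.ThetaRefers (v + 1) u → u < i ∨ u ∈ E ∨ m < u := by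
    intro hk u hu
    rcases π.thetaRefers_succ hv (by omega) hk hu with hu | rfl
    · exact (IH v hmv le_rfl).1 u hu
    · rcases hmv.eq_or_lt with rfl | h
      exacts [Or.inr (Or.inl hmE), Or.inr (Or.inr h)]
  have hξloc : π.mv (v + 1) ≠ .A3 → m < v → ∀ u, π.XiRefers (v + 1) u → u < i ∨ m < u := by
    intro hk hmv u hu
    rcases π.xiRefers_succ hv (by omega) hk hu with hu | rfl
    exacts [(IH v hmv.le le_rfl).2 hmv u hu, Or.inr hmv]
  by_cases hA3 : π.mv (v + 1) = .A3
  · have hθ := hθloc (by simp [hA3])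
    refine ⟨hθ, fun _ u hu => ?_⟩
    obtain ⟨u', hch, hu', hxi⟩ := π.exists_child_of_A3 hv hvl hA3
    have hu := hu.of_xi_eq hxi
    rcases hθ u' hu' with h | h | h
    · have := hu.one_le_lt (hu'.one_le_lt (by omega) hvl.le).1 (by omega)
      omega
    · exact absurd hch (hno _ _ (by omega) hvn h)
    · exact (IH u' h.le (by have := hu'.one_le_lt (by omega) hvl.le; omega)).2 h u hu
  by_cases hC4 : π.mv (v + 1) = .C4
  · have hmv' : m < v := by
      refine lt_of_le_of_ne hmv fun h => ?_
      obtain ⟨ls, r, hst⟩ := hm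
      exact (π.steps v hv (by omega)).ne_C4_of_arg (h ▸ hst) hC4
    have hξ := hξloc (by simp [hC4]) hmv'
    refine ⟨fun u hu => ?_, fun _ => hξ⟩
    obtain ⟨u', -, hu', hth⟩ := π.exists_child_of_C4 hv hvl hC4
    have hu := hu.of_th_eq hth
    rcases hξ u' hu' with h | h
    · have := hu.one_le_lt (hu'.one_le_lt (by omega) hvl.le).1 (by omega)
      omega
    · exact (IH u' h.le (by have := hu'.one_le_lt (by omega) hvl.le; omega)).1 u hu
  have hmv' : m < v := by
    refine lt_of_le_of_ne hmv fun h => ?_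
    subst h
    exact hno _ _ (by omega) hvn hmE (π.child_succ_self hv hvl hA3 hC4)
  exact ⟨hθloc hC4, fun _ => hξloc hA3 hmv'⟩

theorem refersOutside {i m n : ℕ} {E : Set ℕ} (him : i < m) (hmE : m ∈ E)
    (hm : ∃ ls r, (π.pos m).st = .arg ls r) (hθm : ∀ u, π.ThetaRefers m u → u < i ∨ u ∈ E)
    (hnl : n ≤ π.len) (hno : ∀ w u, m < w → w < n → u ∈ E → ¬ π.child w u) :
    ∀ w, m ≤ w → w < n → π.RefersOutside i m E w := by
  intro w
  induction w using Nat.strong_induction_on with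
  | _ w IH =>
  intro hmw hwn
  rcases hmw.eq_or_lt with rfl | hmw
  · exact ⟨fun u hu => (hθm u hu).imp_right Or.inl, fun h => absurd h (lt_irrefl _)⟩
  obtain ⟨v, rfl⟩ : ∃ v, w = v + 1 := ⟨w - 1, by omega⟩
  exact π.refersOutside_succ him hmE hm hnl hno (by omega) hwn
    fun u hmu huv => IH u (by omega) hmu (by omega)

theorem not_child_of_refersOutside {i m n a b : ℕ} {E : Set ℕ}
    (hm : ∃ ls r, (π.pos m).st = .arg ls r) (hia : i ≤ a) (ham : a < m) (hmb : m < b)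
    (hbn : b ≤ n) (ha : ∀ xs, T.labelAt? (π.pos a).node ≠ some (.lam xs))
    (hout : ∀ w, m ≤ w → w < n → π.RefersOutside i m E w) : ¬ π.child b a := by
  rintro ⟨-, hbl, ⟨-, rfl⟩ | ⟨-, y, B, l, ξ, -, hlook⟩ | ⟨hk, l, r, x, C, hval, -, hlook⟩⟩
  · omega
  · obtain ⟨-, -, -, xs, hxs⟩ := (π.tablesWF b (by omega) hbl.le).1 _ _ _ _ hlook
    exact ha xs hxs
  obtain ⟨v, rfl⟩ : ∃ v, b = v + 1 := ⟨b - 1, by omega⟩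
  have hmv : m < v := by
    refine lt_of_le_of_ne (by omega) fun h => ?_
    obtain ⟨ls, r', hst⟩ := hm
    rw [Nat.add_sub_cancel, ← h, hst] at hval
    cases hval
  rcases π.xiRefers_succ (by omega) (by omega) (by simp [hk]) ⟨x, _, _, hlook⟩ with h | rfl
  · rcases (hout v hmv.le (by omega)).2 hmv a h <;> omega
  · omega

end Play

theorem basic_tile_plays_child {T : TTree} {P : DIProblem} (π : Play T P)
    (p : List ℕ) (τ : Tile) (hb : BasicTile T p τ)
    (i m n : ℕ) (q : List ℕ) (cuts : List (ℕ × ℕ))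
    (hc : π.TilePlayCuts p τ cuts q)
    (hfirst : ∃ x, cuts.head? = some x ∧ x.1 = i)
    (hlast : ∃ y, cuts.getLast? = some y ∧ y.2 = m)
    (him : i < m) (hmn : m < n)
    (hn : ∃ q', π.TilePlayOn p τ i n q') :
    ∃ m' c, m < m' ∧ m' < n ∧ c ∈ cuts ∧ π.child m' c.2 := by
  obtain ⟨hv, -⟩ := hb
  obtain ⟨c₀, h₀, rfl⟩ := hfirst
  obtain ⟨cl, hl, rfl⟩ := hlast
  obtain ⟨q', cuts', c₀', cl', hc', h₀', hi, hl', rfl⟩ := hn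
  by_contra! hno
  have hst := (hc.simpleTilePlay_of_mem hv cl (List.mem_of_getLast? hl)).arg_and_th_eq.1
  obtain ⟨⟨a, b⟩, hab, hia, ham, hmb, hbn⟩ :=
    hc'.exists_mem_of_arg hv h₀' hl' (hi ▸ him) hmn.le hst
  have hbm : b ≠ cl.2 := fun h => by
    have := hc.snd_eq_getLast_snd_of_node_eq hc' hab
      (by rw [← hc.node_getLast hl]; simp [h]) hl'
    simp only at this
    omega
  have hnl : cl'.2 < π.len := (hc'.simpleTilePlay_of_mem hv _ (List.mem_of_getLast? hl')).1.2.1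
  have hout := π.refersOutside (E := {u | ∃ c ∈ cuts, u = c.2}) him
    ⟨cl, List.mem_of_getLast? hl, rfl⟩ hst (fun _ hu => hc.thetaRefers_getLast_lt hv h₀ hl hu)
    hnl.le (by rintro w _ hw hwn ⟨c, hc, rfl⟩; exact hno w c hw hwn hc)
  have hab' := hc'.simpleTilePlay_of_mem hv _ hab
  exact π.not_child_of_refersOutside hst (hi ▸ hia) ham (lt_of_le_of_ne hmb hbm.symm) hbn
    hab'.2.1 hout hab'.1
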